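/- Let m ≥ 2 and n₁,…,n_m ≥ 2 be integers, let S = [n₁] × ⋯ × [n_m], and let C = (C_α)_{α∈S} be complex numbers with C_α ≠ 0 for all α. Let P = (P₁,…,P_ℓ) be an ordered partition of S that respects the ordering of each [n_i], in the sense that if α ∈ P_q and γ_i < α_i, then (α₁,…,α_{i−1},γ_i,α_{i+1},…,α_m) ∈ P_r for some r < q. Define U_{C,P} := {ψ ∈ ℂ^{n₁} ⊗ ⋯ ⊗ ℂ^{n_m} : Σ_{α∈P_i} C_α ψ_α = 0 for all i ∈ [ℓ]}, where ψ_α is the coordinate of ψ in the standard product basis. Then U_{C,P} is completely entangled, i.e. it contains no nonzero product vector. -/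

import Mathlib

/-
Common definitions.

We model the tensor product `ℂ^{n₁} ⊗ ⋯ ⊗ ℂ^{n_m}` concretely as
`EuclideanSpace ℂ (∀ i, Fin (n i))` (coordinates with respect to the standard
product basis), and the `d`-fold tensor power `(ℂ^a)^{⊗ d}` as
`EuclideanSpace ℂ (ι → Fin a)` for an index type `ι` of cardinality `d`.
-/

noncomputable section

open Finset

/-- The product (elementary tensor) vector `φ₁ ⊗ ⋯ ⊗ φ_m` in a multipartite space,
in coordinates. -/
def prodVec {m : ℕ} {n : Fin m → ℕ} (φ : ∀ i, EuclideanSpace ℂ (Fin (n i))) :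
    EuclideanSpace ℂ (∀ i, Fin (n i)) :=
  WithLp.toLp 2 (fun v => ∏ i, φ i (v i))

/-- The product vector `φ₁ ⊗ ⋯ ⊗ φ_m` in `(ℂ^n)^{⊗ m}`, in coordinates. -/
def prodVecC {m n : ℕ} (φ : Fin m → EuclideanSpace ℂ (Fin n)) :
    EuclideanSpace ℂ (Fin m → Fin n) :=
  WithLp.toLp 2 (fun v => ∏ i, φ i (v i))

/-- The product vector `φ₁ ⊗ φ₂` in a bipartite space, in coordinates. -/
def prodVec2 {ι₁ ι₂ : Type*} (φ₁ : EuclideanSpace ℂ ι₁) (φ₂ : EuclideanSpace ℂ ι₂) :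
    EuclideanSpace ℂ (ι₁ × ι₂) :=
  WithLp.toLp 2 (fun p => φ₁ p.1 * φ₂ p.2)

/-- Geometric measure of entanglement of a subspace of a multipartite space:
`E(U) = inf { 1 - ⟨φ₁⊗⋯⊗φ_m, Π_U (φ₁⊗⋯⊗φ_m)⟩ : ‖φ_i‖ = 1 }`, where we use that
`⟨x, Π_U x⟩ = ‖Π_U x‖²`. -/
def gme {m : ℕ} {n : Fin m → ℕ} (U : Submodule ℂ (EuclideanSpace ℂ (∀ i, Fin (n i)))) : ℝ :=
  sInf {x | ∃ φ : ∀ i, EuclideanSpace ℂ (Fin (n i)),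
    (∀ i, ‖φ i‖ = 1) ∧ x = 1 - ‖U.orthogonalProjectionOnto (prodVec φ)‖ ^ 2}

/-- Geometric measure of entanglement of a subspace of `(ℂ^n)^{⊗ m}`. -/
def gmeC {m n : ℕ} (U : Submodule ℂ (EuclideanSpace ℂ (Fin m → Fin n))) : ℝ :=
  sInf {x | ∃ φ : Fin m → EuclideanSpace ℂ (Fin n),
    (∀ i, ‖φ i‖ = 1) ∧ x = 1 - ‖U.orthogonalProjectionOnto (prodVecC φ)‖ ^ 2}

/-- Geometric measure of entanglement of a subspace of a bipartite space. -/
def gme2 {ι₁ ι₂ : Type*} [Fintype ι₁] [Fintype ι₂]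
    (U : Submodule ℂ (EuclideanSpace ℂ (ι₁ × ι₂))) : ℝ :=
  sInf {x | ∃ (φ₁ : EuclideanSpace ℂ ι₁) (φ₂ : EuclideanSpace ℂ ι₂),
    ‖φ₁‖ = 1 ∧ ‖φ₂‖ = 1 ∧ x = 1 - ‖U.orthogonalProjectionOnto (prodVec2 φ₁ φ₂)‖ ^ 2}

/-- The symmetric subspace `S^{|ι|}(ℂ^a)` of `(ℂ^a)^{⊗ ι}`: tensors invariant under all
permutations of the tensor factors. -/
def symmSub (a : ℕ) (ι : Type*) : Submodule ℂ (EuclideanSpace ℂ (ι → Fin a)) where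
  carrier := {ψ | ∀ σ : Equiv.Perm ι, ∀ v : ι → Fin a, ψ (v ∘ σ) = ψ v}
  zero_mem' := fun _ _ => rfl
  add_mem' := by
    intro x y hx hy σ v
    show x (v ∘ σ) + y (v ∘ σ) = x v + y v
    rw [hx σ v, hy σ v]
  smul_mem' := by
    intro c x hx σ v
    show c * x (v ∘ σ) = c * x v
    rw [hx σ v]

/-- Splitting an index `v : Fin d ⊕ Fin d → Fin a` into a pair of indices, realizing
`(ℂ^a)^{⊗ 2d} ≅ (ℂ^a)^{⊗ d} ⊗ (ℂ^a)^{⊗ d}`. -/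
def pairSplit {a d : ℕ} (v : (Fin d ⊕ Fin d) → Fin a) : (Fin d → Fin a) × (Fin d → Fin a) :=
  (v ∘ Sum.inl, v ∘ Sum.inr)

/-- The symmetric subspace `S^{2d}(ℂ^a)`, viewed inside
`(ℂ^a)^{⊗ d} ⊗ (ℂ^a)^{⊗ d} = EuclideanSpace ℂ ((Fin d → Fin a) × (Fin d → Fin a))`. -/
def symmSub2 (a d : ℕ) :
    Submodule ℂ (EuclideanSpace ℂ ((Fin d → Fin a) × (Fin d → Fin a))) where
  carrier := {ψ | ∀ σ : Equiv.Perm (Fin d ⊕ Fin d), ∀ v : (Fin d ⊕ Fin d) → Fin a,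
    ψ (pairSplit (v ∘ σ)) = ψ (pairSplit v)}
  zero_mem' := fun _ _ => rfl
  add_mem' := by
    intro x y hx hy σ v
    show x (pairSplit (v ∘ σ)) + y (pairSplit (v ∘ σ)) = x (pairSplit v) + y (pairSplit v)
    rw [hx σ v, hy σ v]
  smul_mem' := by
    intro c x hx σ v
    show c * x (pairSplit (v ∘ σ)) = c * x (pairSplit v)
    rw [hx σ v]

/-- The tensor product `W₁ ⊗ W₂` of subspaces, as the span of the elementary tensors,
inside the concrete bipartite space. -/
def tensorPairs {ι₁ ι₂ : Type*} [Fintype ι₁] [Fintype ι₂]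
    (W₁ : Submodule ℂ (EuclideanSpace ℂ ι₁)) (W₂ : Submodule ℂ (EuclideanSpace ℂ ι₂)) :
    Submodule ℂ (EuclideanSpace ℂ (ι₁ × ι₂)) :=
  Submodule.span ℂ {χ | ∃ ψ ∈ W₁, ∃ φ ∈ W₂, χ = prodVec2 ψ φ}

/-- The tensor product `U ⊗ V` of two bipartite subspaces
`U, V ⊆ ℂ^{ι₁} ⊗ ℂ^{ι₂}`, viewed as a bipartite subspace of
`(ℂ^{ι₁} ⊗ ℂ^{ι₁}) ⊗ (ℂ^{ι₂} ⊗ ℂ^{ι₂})` via the regrouping isomorphism that swaps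
the middle two tensor factors. -/
def tensorSub {ι₁ ι₂ : Type*} [Fintype ι₁] [Fintype ι₂]
    (U V : Submodule ℂ (EuclideanSpace ℂ (ι₁ × ι₂))) :
    Submodule ℂ (EuclideanSpace ℂ ((ι₁ × ι₁) × (ι₂ × ι₂))) :=
  Submodule.span ℂ {χ | ∃ ψ ∈ U, ∃ φ ∈ V,
    χ = WithLp.toLp 2 (fun p => ψ (p.1.1, p.2.1) * φ (p.1.2, p.2.2))}

/-- Entrywise complex conjugate of a vector, with respect to the standard basis. -/
def conjVec {ι : Type*} (ψ : EuclideanSpace ℂ ι) : EuclideanSpace ℂ ι :=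
  WithLp.toLp 2 (fun v => starRingEnd ℂ (ψ v))

/-- The subspace `Ū` of entrywise complex conjugates of vectors of `U`. -/
def conjSubmodule {ι : Type*} (U : Submodule ℂ (EuclideanSpace ℂ ι)) :
    Submodule ℂ (EuclideanSpace ℂ ι) where
  carrier := conjVec '' U
  zero_mem' := ⟨0, U.zero_mem, by
    ext v; simp [conjVec]⟩
  add_mem' := by
    rintro a b ⟨x, hx, rfl⟩ ⟨y, hy, rfl⟩
    exact ⟨x + y, U.add_mem hx hy, by
      ext v; simp [conjVec]⟩
  smul_mem' := by
    rintro c a ⟨x, hx, rfl⟩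
    refine ⟨starRingEnd ℂ c • x, U.smul_mem _ hx, ?_⟩
    ext v
    simp [conjVec]

/-- The content (type) of a word `w : Fin d → Fin a`: the vector `α ∈ ℤ_{≥0}^a`
recording how many times each letter occurs. -/
def wordContent {a d : ℕ} (w : Fin d → Fin a) : Fin a → ℕ :=
  fun i => (Finset.univ.filter fun j => w j = i).card

/-- The monomial orthonormal basis vector `|α⟩ = C(d,α)^{1/2} Π_{S^d(ℂ^a)} (e₁^{⊗α₁} ⊗ ⋯ ⊗ e_a^{⊗α_a})`
of the symmetric subspace `S^d(ℂ^a)`, where `α = wordContent w` and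
`e₁^{⊗α₁} ⊗ ⋯ ⊗ e_a^{⊗α_a}` is the standard basis vector of `(ℂ^a)^{⊗ d}` indexed by any word `w`
of content `α` (the projection does not depend on the choice of such a word). -/
def monVec (a d : ℕ) (w : Fin d → Fin a) : EuclideanSpace ℂ (Fin d → Fin a) :=
  (Real.sqrt (Nat.multinomial Finset.univ (wordContent w)) : ℂ) •
    ((symmSub a (Fin d)).orthogonalProjectionOnto (EuclideanSpace.single w 1) :
      EuclideanSpace ℂ (Fin d → Fin a))

/-- The squared Schmidt coefficients of a bipartite vector `ψ`, i.e. the eigenvalues of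
`M Mᴴ` where `M` is the coefficient matrix of `ψ`. -/
def schmidtSqCoeffs {ι₁ ι₂ : Type*} [Fintype ι₁] [Fintype ι₂] [DecidableEq ι₁]
    (ψ : EuclideanSpace ℂ (ι₁ × ι₂)) : ι₁ → ℝ :=
  (Matrix.isHermitian_mul_conjTranspose_self (Matrix.of fun i j => ψ (i, j))).eigenvalues

/-- The Rényi `p`-entropy of (the squared Schmidt coefficients of) a bipartite vector. -/
def renyiEnt (p : ℝ) {ι₁ ι₂ : Type*} [Fintype ι₁] [Fintype ι₂] [DecidableEq ι₁]
    (ψ : EuclideanSpace ℂ (ι₁ × ι₂)) : ℝ :=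
  (1 / (1 - p)) * Real.logb 2 (∑ i, schmidtSqCoeffs ψ i ^ p)

/-- The minimum output Rényi `p`-entropy of a bipartite subspace. -/
def hminEnt (p : ℝ) {ι₁ ι₂ : Type*} [Fintype ι₁] [Fintype ι₂] [DecidableEq ι₁]
    (U : Submodule ℂ (EuclideanSpace ℂ (ι₁ × ι₂))) : ℝ :=
  sInf {x | ∃ ψ ∈ U, ‖ψ‖ = 1 ∧ x = renyiEnt p ψ}

end

/-!
Let `φ₁ ⊗ ⋯ ⊗ φ_m ≠ 0` lie in `U_{C,P}` and let `α_i` be the first index where `φ_i` does not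
vanish. The support of the product vector is a product of sets, with least element `α`, and the
order condition on `P` forces every `β > α` into a strictly later part than `α`. Hence the
constraint of the part containing `α` reads `C_α φ₁(α₁) ⋯ φ_m(α_m) = 0`, which is impossible.
-/

open Function

theorem strictMono_of_update_lt {ι : Type*} [DecidableEq ι] {β : ι → Type*}
    [∀ i, PartialOrder (β i)] [WellFoundedLT (∀ i, β i)] {γ : Type*} [Preorder γ]
    {f : (∀ i, β i) → γ} (hf : ∀ b i (c : β i), c < b i → f (update b i c) < f b) :
    StrictMono f := by
  intro a b hab
  induction b using WellFoundedLT.induction generalizing a with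
  | _ b ih =>
  obtain ⟨hle, j, hj⟩ := Pi.lt_def.mp hab
  have ha_le : a ≤ update b j (a j) := le_update_iff.mpr ⟨le_rfl, fun i _ => hle i⟩
  rcases ha_le.eq_or_lt with h | h
  · exact h ▸ hf b j _ hj
  · exact (ih _ (update_lt_self_iff.mpr hj) h).trans (hf b j _ hj)

section PartIndex

variable {S Q : Type*} {P : Q → Finset S}

noncomputable def partIndex (hpart : ∀ α, ∃! q, α ∈ P q) (α : S) : Q :=
  (hpart α).exists.choose

theorem mem_partIndex (hpart : ∀ α, ∃! q, α ∈ P q) (α : S) : α ∈ P (partIndex hpart α) :=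
  (hpart α).exists.choose_spec

theorem partIndex_eq_of_mem (hpart : ∀ α, ∃! q, α ∈ P q) {α : S} {q : Q} (h : α ∈ P q) :
    partIndex hpart α = q :=
  (hpart α).unique (mem_partIndex hpart α) h

end PartIndex

theorem strictMono_partIndex {ι : Type*} [DecidableEq ι] {β : ι → Type*}
    [∀ i, PartialOrder (β i)] [WellFoundedLT (∀ i, β i)] {Q : Type*} [Preorder Q]
    {P : Q → Finset (∀ i, β i)}
    (hpart : ∀ α, ∃! q, α ∈ P q)
    (horder : ∀ q, ∀ α ∈ P q, ∀ i (γ : β i), γ < α i → ∃ r < q, update α i γ ∈ P r) :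
    StrictMono (partIndex hpart) :=
  strictMono_of_update_lt fun b i c hc => by
    obtain ⟨r, hr, hmem⟩ := horder _ b (mem_partIndex hpart b) i c hc
    rwa [partIndex_eq_of_mem hpart hmem]

theorem prodVec_ne_zero_iff {m : ℕ} {n : Fin m → ℕ} (φ : ∀ i, EuclideanSpace ℂ (Fin (n i)))
    (β : ∀ i, Fin (n i)) : prodVec φ β ≠ 0 ↔ ∀ i, φ i (β i) ≠ 0 := by
  simp [prodVec, Finset.prod_ne_zero_iff]

theorem exists_isLeast_support_prodVec {m : ℕ} {n : Fin m → ℕ}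
    (φ : ∀ i, EuclideanSpace ℂ (Fin (n i))) (hφ : prodVec φ ≠ 0) :
    ∃ α, IsLeast {β | prodVec φ β ≠ 0} α := by
  classical
  obtain ⟨v, hv⟩ : ∃ v, prodVec φ v ≠ 0 := by
    by_contra! h
    exact hφ (PiLp.ext h)
  have hsupp i : (Finset.univ.filter fun j => φ i j ≠ 0).Nonempty :=
    ⟨v i, by simpa using (prodVec_ne_zero_iff φ v).mp hv i⟩
  refine ⟨fun i => (Finset.univ.filter fun j => φ i j ≠ 0).min' (hsupp i), ?_, ?_⟩
  · refine (prodVec_ne_zero_iff φ _).mpr fun i => ?_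
    simpa using Finset.min'_mem _ (hsupp i)
  · intro β hβ i
    exact Finset.min'_le _ _ (by simpa using (prodVec_ne_zero_iff φ β).mp hβ i)

theorem stmt1_general (m : ℕ) (n : Fin m → ℕ)
    (C : (∀ i, Fin (n i)) → ℂ) (hC : ∀ α, C α ≠ 0)
    (L : ℕ) (P : Fin L → Finset (∀ i, Fin (n i)))
    (hpart : ∀ α : ∀ i, Fin (n i), ∃! q : Fin L, α ∈ P q)
    (horder : ∀ q : Fin L, ∀ α ∈ P q, ∀ (i : Fin m) (γ : Fin (n i)), γ < α i →
      ∃ r : Fin L, r < q ∧ Function.update α i γ ∈ P r)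
    (U : Submodule ℂ (EuclideanSpace ℂ (∀ i, Fin (n i))))
    (hU : ∀ ψ : EuclideanSpace ℂ (∀ i, Fin (n i)), ψ ∈ U ↔
      ∀ q : Fin L, ∑ α ∈ P q, C α * ψ α = 0) :
    ∀ φ : ∀ i, EuclideanSpace ℂ (Fin (n i)), prodVec φ ∈ U → prodVec φ = 0 := by
  intro φ hmem
  by_contra hφ
  obtain ⟨α, hα, hα_least⟩ := exists_isLeast_support_prodVec φ hφ
  have hmono := strictMono_partIndex hpart horder
  have hsum : ∑ β ∈ P (partIndex hpart α), C β * prodVec φ β = C α * prodVec φ α := by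
    refine Finset.sum_eq_single_of_mem α (mem_partIndex hpart α) fun β hβ hβα => ?_
    by_contra hβ_supp
    have hαβ : α < β := (hα_least (right_ne_zero_of_mul hβ_supp)).lt_of_ne' hβα
    exact (hmono hαβ).ne (partIndex_eq_of_mem hpart hβ).symm
  exact mul_ne_zero (hC α) hα (hsum ▸ (hU _).mp hmem _)

/-- If `P` is an ordered partition of the index set respecting the order of
each factor, then the subspace `U_{C,P}` is completely entangled. -/
theorem stmt1 (m : ℕ) (hm : 2 ≤ m) (n : Fin m → ℕ) (hn : ∀ i, 2 ≤ n i)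
    (C : (∀ i, Fin (n i)) → ℂ) (hC : ∀ α, C α ≠ 0)
    (L : ℕ) (P : Fin L → Finset (∀ i, Fin (n i)))
    (hpart : ∀ α : ∀ i, Fin (n i), ∃! q : Fin L, α ∈ P q)
    (horder : ∀ q : Fin L, ∀ α ∈ P q, ∀ (i : Fin m) (γ : Fin (n i)), γ < α i →
      ∃ r : Fin L, r < q ∧ Function.update α i γ ∈ P r)
    (U : Submodule ℂ (EuclideanSpace ℂ (∀ i, Fin (n i))))
    (hU : ∀ ψ : EuclideanSpace ℂ (∀ i, Fin (n i)), ψ ∈ U ↔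
      ∀ q : Fin L, ∑ α ∈ P q, C α * ψ α = 0) :
    ∀ φ : ∀ i, EuclideanSpace ℂ (Fin (n i)), prodVec φ ∈ U → prodVec φ = 0 :=
  stmt1_general m n C hC L P hpart horder U hU
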